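/- For any tower (X_n)_{n∈ω} of uniform spaces and any monotone sequence (d_n)_{n∈ω} of uniform pseudometrics (d_n a uniform pseudometric on X_n), the limit lim d_n is a pseudometric on X = ⋃_n X_n that is uniform with respect to the uniformity of the uniform direct limit u-lim X_n; equivalently, for every n the restriction of lim d_n to X_n² is a uniform pseudometric on X_n. -/

import Mathlib

/-!
The chain sums from `x` to `y` are closed under concatenation and, for symmetric `e`, under
reversal, so their infimum is a pseudometric; it lies below `e` itself. For the limit
pseudometric, monotonicity of `(d_n)` gives `d_{|x,y|} ≤ d_n` on `X_n`, hence
`lim d_n ≤ d_n` there, which makes every restriction uniform. The uniformity generated by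
`lim d_n` then makes all inclusions `X_n → X` uniformly continuous, so it is coarser than
the direct limit uniformity.
-/

open Set Filter Topology

universe u

/-- A tower of uniform spaces on the ambient set `X`: an increasing sequence
`S 0 ⊆ S 1 ⊆ ⋯` of subsets covering `X`, each `S n` carrying a uniformity which is
the subspace uniformity inherited from `S (n+1)`. -/
structure UniformTower (X : Type u) where
  S : ℕ → Set X
  mono : Monotone S
  iUnion_eq : ⋃ n, S n = Set.univ
  u : (n : ℕ) → UniformSpace (S n)
  compat : ∀ n, u n = UniformSpace.comap (Set.inclusion (mono (Nat.le_succ n))) (u (n + 1))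

namespace UniformTower

variable {X : Type u} (T : UniformTower X)

/-- The uniform direct limit: the strongest (finest) uniformity on `X` making all
the identity inclusions `S n → X` uniformly continuous. -/
noncomputable def dirLim : UniformSpace X :=
  sInf {u' : UniformSpace X |
    ∀ n, @UniformContinuous _ _ (T.u n) u' (Subtype.val : T.S n → X)}

/-- The height `|x| = min {n : x ∈ S n}` of a point of `X`. -/
noncomputable def height (x : X) : ℕ := sInf {n | x ∈ T.S n}

lemma mem_S_height (x : X) : x ∈ T.S (T.height x) := by
  have hx : x ∈ ⋃ n, T.S n := T.iUnion_eq ▸ Set.mem_univ x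
  rcases Set.mem_iUnion.mp hx with ⟨n, hn⟩
  exact Nat.sInf_mem ⟨n, show n ∈ {m | x ∈ T.S m} from hn⟩

/-- Given a sequence of pseudometrics `d n` on the stages `S n`, the distance
`d_{|x,y|}(x,y)` where `|x,y| = max (|x|, |y|)`. -/
noncomputable def chainD (d : (n : ℕ) → T.S n → T.S n → ℝ) (x y : X) : ℝ :=
  d (max (T.height x) (T.height y))
    ⟨x, T.mono (le_max_left _ _) (T.mem_S_height x)⟩
    ⟨y, T.mono (le_max_right _ _) (T.mem_S_height y)⟩

/-- The limit pseudometric `lim d_n` of a sequence of pseudometrics: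
`lim d_n (x,y) = inf { Σ_{i=1}^m d_{|x_{i-1},x_i|}(x_{i-1},x_i) : x = x_0, x_1, …, x_m = y }`. -/
noncomputable def limD (d : (n : ℕ) → T.S n → T.S n → ℝ) (x y : X) : ℝ :=
  sInf {r : ℝ | ∃ (m : ℕ) (c : ℕ → X), c 0 = x ∧ c m = y ∧
    r = ∑ i ∈ Finset.range m, T.chainD d (c i) (c (i + 1))}

/-- A sequence of pseudometrics on the stages of the tower is monotone if
`d n ≤ d (n+1)` on `S n × S n`. -/
def MonotoneSeq (d : (n : ℕ) → T.S n → T.S n → ℝ) : Prop :=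
  ∀ n (x y : T.S n),
    d n x y ≤ d (n + 1) (Set.inclusion (T.mono (Nat.le_succ n)) x)
      (Set.inclusion (T.mono (Nat.le_succ n)) y)

end UniformTower

/-- `d` is a pseudometric: it vanishes on the diagonal, is symmetric and satisfies
the triangle inequality. -/
def IsPseudometric {α : Type*} (d : α → α → ℝ) : Prop :=
  (∀ x, d x x = 0) ∧ (∀ x y, d x y = d y x) ∧ (∀ x y z, d x z ≤ d x y + d y z)

/-- `d` is a uniform pseudometric on the uniform space `(α, u)`:
for every `ε > 0` the set `{d < ε}` is an entourage. -/
def IsUniformPseudometric {α : Type*} (u : UniformSpace α) (d : α → α → ℝ) : Prop :=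
  IsPseudometric d ∧ ∀ ε : ℝ, 0 < ε → {p : α × α | d p.1 p.2 < ε} ∈ @uniformity α u

open Pointwise

def chainSums {α : Type*} (e : α → α → ℝ) (x y : α) : Set ℝ :=
  {r | ∃ (m : ℕ) (c : ℕ → α), c 0 = x ∧ c m = y ∧
    r = ∑ i ∈ Finset.range m, e (c i) (c (i + 1))}

noncomputable def chainDist {α : Type*} (e : α → α → ℝ) (x y : α) : ℝ :=
  sInf (chainSums e x y)

section ChainSums

variable {α : Type*} {e : α → α → ℝ} {x y z : α} {r s : ℝ}

lemma zero_mem_chainSums (x : α) : (0 : ℝ) ∈ chainSums e x x :=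
  ⟨0, fun _ => x, rfl, rfl, by simp⟩

lemma mem_chainSums_self (x y : α) : e x y ∈ chainSums e x y :=
  ⟨1, fun i => if i = 0 then x else y, by simp, by simp, by simp⟩

lemma add_mem_chainSums_cons (h : r ∈ chainSums e y z) : e x y + r ∈ chainSums e x z := by
  obtain ⟨m, c, rfl, rfl, rfl⟩ := h
  refine ⟨m + 1, fun | 0 => x | i + 1 => c i, rfl, rfl, ?_⟩
  rw [Finset.sum_range_succ', add_comm]

lemma add_mem_chainSums (hr : r ∈ chainSums e x y) (hs : s ∈ chainSums e y z) :
    r + s ∈ chainSums e x z := by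
  obtain ⟨m, c, rfl, rfl, rfl⟩ := hr
  induction m generalizing c with
  | zero => simpa using hs
  | succ m ih =>
    convert add_mem_chainSums_cons (x := c 0) (ih (fun i => c (i + 1)) hs) using 1
    rw [Finset.sum_range_succ']
    ring

lemma mem_chainSums_comm (he : ∀ x y, e x y = e y x) (h : r ∈ chainSums e x y) :
    r ∈ chainSums e y x := by
  obtain ⟨m, c, rfl, rfl, rfl⟩ := h
  refine ⟨m, fun i => c (m - i), by simp, by simp, ?_⟩
  rw [← Finset.sum_range_reflect]
  refine Finset.sum_congr rfl fun j hj => ?_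
  have hj : j < m := Finset.mem_range.mp hj
  dsimp only
  rw [he, show m - 1 - j + 1 = m - j by omega, show m - (j + 1) = m - 1 - j by omega]

lemma nonneg_of_mem_chainSums (he : ∀ x y, 0 ≤ e x y) (h : r ∈ chainSums e x y) : 0 ≤ r := by
  obtain ⟨m, c, -, -, rfl⟩ := h
  exact Finset.sum_nonneg fun i _ => he _ _

lemma bddBelow_chainSums (he : ∀ x y, 0 ≤ e x y) (x y : α) : BddBelow (chainSums e x y) :=
  ⟨0, fun _ => nonneg_of_mem_chainSums he⟩

lemma chainDist_le (he : ∀ x y, 0 ≤ e x y) (x y : α) : chainDist e x y ≤ e x y :=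
  csInf_le (bddBelow_chainSums he x y) (mem_chainSums_self x y)

lemma isPseudometric_chainDist (he : ∀ x y, 0 ≤ e x y) (he' : ∀ x y, e x y = e y x) :
    IsPseudometric (chainDist e) := by
  refine ⟨fun x => ?_, fun x y => ?_, fun x y z => ?_⟩
  · exact le_antisymm (csInf_le (bddBelow_chainSums he x x) (zero_mem_chainSums x))
      (le_csInf ⟨_, zero_mem_chainSums x⟩ fun _ => nonneg_of_mem_chainSums he)
  · exact congrArg sInf (Set.ext fun r => ⟨mem_chainSums_comm he', mem_chainSums_comm he'⟩)
  · rw [chainDist, chainDist, chainDist, ← csInf_add ⟨_, mem_chainSums_self x y⟩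
      (bddBelow_chainSums he x y) ⟨_, mem_chainSums_self y z⟩ (bddBelow_chainSums he y z)]
    refine csInf_le_csInf (bddBelow_chainSums he x z) ?_ ?_
    · exact Set.add_nonempty.mpr ⟨⟨_, mem_chainSums_self x y⟩, ⟨_, mem_chainSums_self y z⟩⟩
    · rintro _ ⟨r, hr, s, hs, rfl⟩
      exact add_mem_chainSums hr hs

end ChainSums

lemma IsPseudometric.nonneg {α : Type*} {d : α → α → ℝ} (hd : IsPseudometric d) (x y : α) :
    0 ≤ d x y := by
  obtain ⟨hrefl, hsymm, htri⟩ := hd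
  linarith [htri x y x, hrefl x, hsymm y x]

lemma IsPseudometric.isUniformPseudometric_dirLim {X : Type u} {T : UniformTower X}
    {e : X → X → ℝ} (he : IsPseudometric e)
    (h : ∀ n, ∀ ε > 0, {p : T.S n × T.S n | e p.1 p.2 < ε} ∈ @uniformity _ (T.u n)) :
    IsUniformPseudometric T.dirLim e := by
  have half : ∀ ε > (0 : ℝ), ∃ δ > (0 : ℝ), ∀ x < δ, ∀ y < δ, x + y < ε :=
    fun ε hε => ⟨ε / 2, half_pos hε, fun x hx y hy => by linarith⟩
  let U : UniformSpace X := .ofFun e he.1 he.2.1 he.2.2 half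
  have hbasis := UniformSpace.hasBasis_ofFun ⟨1, one_pos⟩ e he.1 he.2.1 he.2.2 half
  have hU : ∀ n, @UniformContinuous _ _ (T.u n) U Subtype.val := fun n =>
    hbasis.tendsto_right_iff.2 fun ε hε => h n ε hε
  have hle : T.dirLim ≤ U := sInf_le hU
  exact ⟨he, fun ε hε => hle (hbasis.mem_of_mem hε)⟩

namespace UniformTower

variable {X : Type u} (T : UniformTower X) {d : (n : ℕ) → T.S n → T.S n → ℝ}

lemma height_le {x : X} {n : ℕ} (hx : x ∈ T.S n) : T.height x ≤ n :=
  Nat.sInf_le hx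

lemma limD_eq_chainDist : T.limD d = chainDist (T.chainD d) :=
  rfl

lemma chainD_eq {x y : X} {n : ℕ} (hn : n = max (T.height x) (T.height y)) (hx : x ∈ T.S n)
    (hy : y ∈ T.S n) : T.chainD d x y = d n ⟨x, hx⟩ ⟨y, hy⟩ := by
  subst hn
  rfl

variable {T}

lemma MonotoneSeq.le_of_le (hmono : T.MonotoneSeq d) {m n : ℕ} (h : m ≤ n) {x y : X}
    (hx : x ∈ T.S m) (hy : y ∈ T.S m) :
    d m ⟨x, hx⟩ ⟨y, hy⟩ ≤ d n ⟨x, T.mono h hx⟩ ⟨y, T.mono h hy⟩ := by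
  induction n, h using Nat.le_induction with
  | base => exact le_rfl
  | succ n hmn ih => exact ih.trans (hmono n ⟨x, T.mono hmn hx⟩ ⟨y, T.mono hmn hy⟩)

lemma chainD_nonneg (hd : ∀ n, IsPseudometric (d n)) (x y : X) : 0 ≤ T.chainD d x y :=
  (hd _).nonneg _ _

lemma chainD_comm (hd : ∀ n, IsPseudometric (d n)) (x y : X) :
    T.chainD d x y = T.chainD d y x := by
  rw [chainD, (hd _).2.1, T.chainD_eq (max_comm _ _)]

lemma chainD_le (hmono : T.MonotoneSeq d) {n : ℕ} (x y : T.S n) :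
    T.chainD d x y ≤ d n x y :=
  hmono.le_of_le (max_le (T.height_le x.2) (T.height_le y.2)) _ _

lemma isPseudometric_limD (hd : ∀ n, IsPseudometric (d n)) : IsPseudometric (T.limD d) := by
  rw [limD_eq_chainDist]
  exact isPseudometric_chainDist (chainD_nonneg hd) (chainD_comm hd)

lemma limD_le (hd : ∀ n, IsPseudometric (d n)) (hmono : T.MonotoneSeq d) {n : ℕ}
    (x y : T.S n) : T.limD d x y ≤ d n x y :=
  (T.limD_eq_chainDist ▸ chainDist_le (chainD_nonneg hd) _ _).trans (chainD_le hmono x y)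

lemma isUniformPseudometric_limD_restrict (hd : ∀ n, IsUniformPseudometric (T.u n) (d n))
    (hmono : T.MonotoneSeq d) (n : ℕ) :
    IsUniformPseudometric (T.u n) (fun x y : T.S n => T.limD d x y) := by
  have hlim := isPseudometric_limD fun n => (hd n).1
  refine ⟨⟨fun x => hlim.1 x, fun x y => hlim.2.1 x y, fun x y z => hlim.2.2 x y z⟩,
    fun ε hε => ?_⟩
  filter_upwards [(hd n).2 ε hε] with p hp
  exact (limD_le (fun n => (hd n).1) hmono p.1 p.2).trans_lt hp

end UniformTower

/-- For any tower `(X_n)` of uniform spaces and any monotone sequence `(d_n)` of uniform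
pseudometrics (`d_n` a uniform pseudometric on `X_n`), the limit `lim d_n` is a pseudometric
on `X = ⋃_n X_n` which is uniform with respect to the uniformity of the uniform direct limit
`u-lim X_n`; equivalently, every restriction of `lim d_n` to `X_n × X_n` is a uniform
pseudometric on `X_n`. -/
theorem statement7 {X : Type u} (T : UniformTower X)
    (d : (n : ℕ) → T.S n → T.S n → ℝ)
    (hd : ∀ n, IsUniformPseudometric (T.u n) (d n))
    (hmono : T.MonotoneSeq d) :
    IsUniformPseudometric T.dirLim (T.limD d) ∧
      ∀ n, IsUniformPseudometric (T.u n)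
        (fun x y : T.S n => T.limD d x.val y.val) := by
  have hrestrict := UniformTower.isUniformPseudometric_limD_restrict hd hmono
  have hlim := UniformTower.isPseudometric_limD fun n => (hd n).1
  exact ⟨hlim.isUniformPseudometric_dirLim fun n => (hrestrict n).2, hrestrict⟩
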